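/- Let R ⊆ F^{2n} be a Lagrangian state with standard-form parity-check matrix H = [[Y,0,I,Aᵀ],[-A,I,0,0]] (Y = Yᵀ). For every element ((q₀,q₁),(p₀,p₁)) ∈ R, the power input q₀ᵀp₀ + q₁ᵀp₁ equals -q₀ᵀYq₀. Consequently (if char F ≠ 2), R is lossless (power input identically zero) if and only if Y = 0. -/

import Mathlib

/-!
The parity-check equations say exactly that `q₁ = A q₀` and `p₀ = -Y q₀ - Aᵀ p₁`, with `q₀` and
`p₁` free. Substituting into `q₀ ⬝ p₀ + q₁ ⬝ p₁`, the terms `q₀ ⬝ Aᵀ p₁` and `A q₀ ⬝ p₁` cancel,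
leaving `-q₀ ⬝ Y q₀`. Since every `q₀` occurs (take `p₁ = 0`), losslessness says that the
quadratic form of the symmetric matrix `Y` vanishes, and by polarization (2 being invertible)
this forces `Y = 0`.
-/

open Matrix

namespace Matrix

theorem eq_zero_of_isSymm_of_dotProduct_mulVec_self_eq_zero {R n : Type*} [CommRing R]
    [Invertible (2 : R)] [Fintype n] [DecidableEq n] {Y : Matrix n n R} (hY : Y.IsSymm)
    (h : ∀ x, x ⬝ᵥ Y *ᵥ x = 0) : Y = 0 := by
  by_contra hne
  have hsymm : LinearMap.IsSymm (toBilin' Y) := ⟨fun x y => by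
    rw [RingHom.id_apply, toBilin'_apply', toBilin'_apply', dotProduct_mulVec, ← mulVec_transpose,
      hY.eq, dotProduct_comm]⟩
  obtain ⟨x, hx⟩ := LinearMap.BilinForm.exists_bilinForm_self_ne_zero
    ((map_ne_zero_iff _ toBilin'.injective).2 hne) hsymm
  exact hx (by rw [toBilin'_apply', h])

end Matrix

section StandardForm

variable {R m n : Type*} [CommRing R] [Fintype m] [Fintype n] [DecidableEq m] [DecidableEq n]

def standardParityCheck (Y : Matrix m m R) (A : Matrix n m R) :
    Matrix (m ⊕ n) ((m ⊕ n) ⊕ (m ⊕ n)) R :=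
  fromBlocks (fromCols Y 0) (fromCols 1 Aᵀ) (fromCols (-A) 1) 0

theorem standardParityCheck_mulVec_eq_zero_iff (Y : Matrix m m R) (A : Matrix n m R)
    (q₀ : m → R) (q₁ : n → R) (p₀ : m → R) (p₁ : n → R) :
    standardParityCheck Y A *ᵥ Sum.elim (Sum.elim q₀ q₁) (Sum.elim p₀ p₁) = 0 ↔
      q₁ = A *ᵥ q₀ ∧ p₀ = -(Y *ᵥ q₀) - Aᵀ *ᵥ p₁ := by
  simp only [standardParityCheck, fromBlocks_mulVec, fromCols_mulVec, Sum.elim_comp_inl,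
    Sum.elim_comp_inr, zero_mulVec, one_mulVec, neg_mulVec, add_zero, ← Sum.elim_zero_zero,
    Sum.elim_eq_iff]
  constructor
  · rintro ⟨hp, hq⟩
    exact ⟨by linear_combination hq, by linear_combination hp⟩
  · rintro ⟨rfl, rfl⟩
    constructor <;> abel

def powerInput {ι : Type*} [Fintype ι] (v : ι ⊕ ι → R) : R :=
  ∑ i, v (Sum.inl i) * v (Sum.inr i)

theorem powerInput_sumElim {ι : Type*} [Fintype ι] (q p : ι → R) :
    powerInput (Sum.elim q p) = q ⬝ᵥ p :=
  rfl

theorem powerInput_eq_neg_dotProduct_mulVec {Y : Matrix m m R} {A : Matrix n m R}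
    {v : (m ⊕ n) ⊕ (m ⊕ n) → R} (hv : standardParityCheck Y A *ᵥ v = 0) :
    powerInput v = -((fun i => v (Sum.inl (Sum.inl i))) ⬝ᵥ
      Y *ᵥ fun i => v (Sum.inl (Sum.inl i))) := by
  obtain ⟨q₀, q₁, p₀, p₁, rfl⟩ :
      ∃ q₀ q₁ p₀ p₁, v = Sum.elim (Sum.elim q₀ q₁) (Sum.elim p₀ p₁) :=
    ⟨_, _, _, _, by ext ((i | i) | (i | i)) <;> rfl⟩
  obtain ⟨rfl, rfl⟩ := (standardParityCheck_mulVec_eq_zero_iff Y A q₀ q₁ p₀ p₁).1 hv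
  show powerInput _ = -(q₀ ⬝ᵥ Y *ᵥ q₀)
  rw [powerInput_sumElim, sumElim_dotProduct_sumElim, dotProduct_sub, dotProduct_neg,
    dotProduct_mulVec q₀ Aᵀ, vecMul_transpose]
  ring

end StandardForm

/-- For a Lagrangian state with standard-form parity-check matrix
`H = [[Y,0,I,Aᵀ],[-A,I,0,0]]` (`Y = Yᵀ`), the power input of every element
`(q,p)` of the kernel is `Σ q_i p_i = -q₀ᵀYq₀`; consequently (char F ≠ 2) the
state is lossless iff `Y = 0`. -/
theorem stmt_13 (F : Type*) [Field F] (hchar : ringChar F ≠ 2) (np nq : ℕ)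
    (Y : Matrix (Fin np) (Fin np) F) (A : Matrix (Fin nq) (Fin np) F)
    (hY : Y = Y.transpose) :
    let H : Matrix (Fin np ⊕ Fin nq) ((Fin np ⊕ Fin nq) ⊕ (Fin np ⊕ Fin nq)) F :=
      Matrix.fromBlocks (Matrix.fromCols Y 0) (Matrix.fromCols 1 A.transpose)
        (Matrix.fromCols (-A) 1) 0
    let R := LinearMap.ker H.mulVecLin
    (∀ v ∈ R, (∑ i : Fin np ⊕ Fin nq, v (Sum.inl i) * v (Sum.inr i))
        = -((fun i => v (Sum.inl (Sum.inl i))) ⬝ᵥ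
            Y.mulVec (fun i => v (Sum.inl (Sum.inl i))))) ∧
    ((∀ v ∈ R, (∑ i : Fin np ⊕ Fin nq, v (Sum.inl i) * v (Sum.inr i)) = 0)
        ↔ Y = 0) := by
  intro H R
  have hpower (v) (hv : v ∈ R) := powerInput_eq_neg_dotProduct_mulVec (LinearMap.mem_ker.1 hv)
  refine ⟨hpower, fun hlossless => ?_, fun hY₀ v hv => (hpower v hv).trans (by simp [hY₀])⟩
  let _ := invertibleOfNonzero (Ring.two_ne_zero hchar)
  refine eq_zero_of_isSymm_of_dotProduct_mulVec_self_eq_zero hY.symm fun q₀ => ?_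
  have hmem : Sum.elim (Sum.elim q₀ (A *ᵥ q₀)) (Sum.elim (-(Y *ᵥ q₀)) 0) ∈ R :=
    (standardParityCheck_mulVec_eq_zero_iff Y A _ _ _ _).2 ⟨rfl, by simp⟩
  exact neg_eq_zero.1 ((hpower _ hmem).symm.trans (hlossless _ hmem))
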